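/- The limit map lim on Baire space is strongly Weihrauch equivalent to the parallelization of LPO. -/

import Mathlib

open scoped Classical

/-! ## Basic notions of Weihrauch complexity -/

/-- The finite prefix of length `m` of a point of Baire space, as a list. -/
def pref (p : ℕ → ℕ) (m : ℕ) : List ℕ := List.ofFn (fun i : Fin m => p i)

/-- Type-2 computability of a partial function on Baire space, defined via monotone
computable word functions producing longer and longer prefixes of the output. -/
def BaireComputable (F : (ℕ → ℕ) →. (ℕ → ℕ)) : Prop :=
  ∃ ψ : List ℕ → List ℕ, Computable ψ ∧
    (∀ u v : List ℕ, u <+: v → ψ u <+: ψ v) ∧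
    ∀ p q, q ∈ F p → ∀ n, ∃ m, (ψ (pref p m))[n]? = some (q n)

/-- The interleaving pairing `⟨p,q⟩` on Baire space. -/
def pairB (p q : ℕ → ℕ) : ℕ → ℕ := fun n => if n % 2 = 0 then p (n / 2) else q (n / 2)

def evenPart (r : ℕ → ℕ) : ℕ → ℕ := fun n => r (2 * n)

def oddPart (r : ℕ → ℕ) : ℕ → ℕ := fun n => r (2 * n + 1)

/-- The `i`-th component of the countable tupling `⟨p₀,p₁,…⟩⟨i,k⟩ = pᵢ(k)`
(using the Cantor pairing). -/
def proj (r : ℕ → ℕ) (i : ℕ) : ℕ → ℕ := fun k => r (Nat.pair i k)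

/-- A represented space: a set `X` together with a surjective partial map
from Baire space onto `X`. -/
structure RepSp (X : Type*) where
  δ : (ℕ → ℕ) →. X
  surj : ∀ x : X, ∃ p, x ∈ δ p

theorem mem_part_mk {α : Type*} {D : Prop} {g : D → α} {a : α} (h : D) (e : g h = a) :
    a ∈ Part.mk D g := Part.mem_mk_iff.mpr ⟨h, e⟩

/-- The identity representation of Baire space. -/
def repBaire : RepSp (ℕ → ℕ) where
  δ := fun p => Part.some p
  surj := fun p => ⟨p, Part.mem_some p⟩

/-- The standard representation of the natural numbers. -/
def repNat : RepSp ℕ where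
  δ := fun p => Part.some (p 0)
  surj := fun n => ⟨fun _ => n, Part.mem_some n⟩

/-- `F` is a realizer of the problem `f :⊆ X ⇉ Y` (a problem is a multi-valued
function `f : X → Set Y`, whose domain is the set of `x` with `f x` nonempty). -/
def Realizes {X Y : Type*} (δX : RepSp X) (δY : RepSp Y)
    (f : X → Set Y) (F : (ℕ → ℕ) →. (ℕ → ℕ)) : Prop :=
  ∀ p x, x ∈ δX.δ p → (f x).Nonempty → ∃ q ∈ F p, ∃ y ∈ δY.δ q, y ∈ f x

/-- Weihrauch reducibility: `f ≤_W g` iff there are computable `H, K` such that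
`p ↦ H⟨p, G(K(p))⟩` realizes `f` whenever `G` realizes `g`. -/
def WRed {X Y Z W : Type*} (δX : RepSp X) (δY : RepSp Y) (δZ : RepSp Z) (δW : RepSp W)
    (f : X → Set Y) (g : Z → Set W) : Prop :=
  ∃ H K : (ℕ → ℕ) →. (ℕ → ℕ), BaireComputable H ∧ BaireComputable K ∧
    ∀ G : (ℕ → ℕ) →. (ℕ → ℕ), Realizes δZ δW g G →
      Realizes δX δY f
        (fun p => (K p).bind fun r => (G r).bind fun q => H (pairB p q))

/-- Strong Weihrauch reducibility: `f ≤_sW g` iff there are computable `H, K`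
such that `H ∘ G ∘ K` realizes `f` whenever `G` realizes `g`. -/
def SWRed {X Y Z W : Type*} (δX : RepSp X) (δY : RepSp Y) (δZ : RepSp Z) (δW : RepSp W)
    (f : X → Set Y) (g : Z → Set W) : Prop :=
  ∃ H K : (ℕ → ℕ) →. (ℕ → ℕ), BaireComputable H ∧ BaireComputable K ∧
    ∀ G : (ℕ → ℕ) →. (ℕ → ℕ), Realizes δZ δW g G →
      Realizes δX δY f (fun p => (K p).bind fun r => (G r).bind fun q => H q)

/-- Weihrauch equivalence. -/
def WEquiv {X Y Z W : Type*} (δX : RepSp X) (δY : RepSp Y) (δZ : RepSp Z) (δW : RepSp W)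
    (f : X → Set Y) (g : Z → Set W) : Prop :=
  WRed δX δY δZ δW f g ∧ WRed δZ δW δX δY g f

/-- Strong Weihrauch equivalence. -/
def SWEquiv {X Y Z W : Type*} (δX : RepSp X) (δY : RepSp Y) (δZ : RepSp Z) (δW : RepSp W)
    (f : X → Set Y) (g : Z → Set W) : Prop :=
  SWRed δX δY δZ δW f g ∧ SWRed δZ δW δX δY g f

/-- The identity problem on Baire space. -/
def idProblem : (ℕ → ℕ) → Set (ℕ → ℕ) := fun p => {p}

/-! ## Constructions on representations and problems -/

/-- Representation of the product of two represented spaces. -/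
def prodRep {X Z : Type*} (δX : RepSp X) (δZ : RepSp Z) : RepSp (X × Z) where
  δ := fun r => (δX.δ (evenPart r)).bind fun x => (δZ.δ (oddPart r)).map fun z => (x, z)
  surj := by
    intro xz
    obtain ⟨p, hp⟩ := δX.surj xz.1
    obtain ⟨q, hq⟩ := δZ.surj xz.2
    have he : evenPart (pairB p q) = p := by
      funext n
      have h1 : (2 * n) % 2 = 0 := by omega
      have h2 : (2 * n) / 2 = n := by omega
      simp [evenPart, pairB, h1, h2]
    have ho : oddPart (pairB p q) = q := by
      funext n
      have h1 : ¬((2 * n + 1) % 2 = 0) := by omega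
      have h2 : (2 * n + 1) / 2 = n := by omega
      simp [oddPart, pairB, h1, h2]
    refine ⟨pairB p q, Part.mem_bind_iff.mpr ⟨xz.1, by rw [he]; exact hp,
      (Part.mem_map_iff _).mpr ⟨xz.2, by rw [ho]; exact hq, rfl⟩⟩⟩

/-- The product `f × g` of two problems. -/
def prodProblem {X Y Z W : Type*} (f : X → Set Y) (g : Z → Set W) :
    X × Z → Set (Y × W) :=
  fun xz => f xz.1 ×ˢ g xz.2

/-- Representation of the disjoint union of two represented spaces. -/
def sumRep {X Z : Type*} (δX : RepSp X) (δZ : RepSp Z) : RepSp (X ⊕ Z) where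
  δ := fun r =>
    if r 0 = 0 then (δX.δ fun n => r (n + 1)).map Sum.inl
    else if r 0 = 1 then (δZ.δ fun n => r (n + 1)).map Sum.inr
    else Part.none
  surj := by
    rintro (x | z)
    · obtain ⟨p, hp⟩ := δX.surj x
      refine ⟨fun n => Nat.casesOn n 0 p, ?_⟩
      show Sum.inl x ∈ (δX.δ p).map Sum.inl
      exact (Part.mem_map_iff _).mpr ⟨x, hp, rfl⟩
    · obtain ⟨p, hp⟩ := δZ.surj z
      refine ⟨fun n => Nat.casesOn n 1 p, ?_⟩
      show Sum.inr z ∈ (δZ.δ p).map Sum.inr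
      exact (Part.mem_map_iff _).mpr ⟨z, hp, rfl⟩

/-- The coproduct `f ⊔ g` of two problems. -/
def coprodProblem {X Y Z W : Type*} (f : X → Set Y) (g : Z → Set W) :
    X ⊕ Z → Set (Y ⊕ W)
  | Sum.inl x => Sum.inl '' f x
  | Sum.inr z => Sum.inr '' g z

/-- The meet `f ⊓ g` of two problems. -/
def meetProblem {X Y Z W : Type*} (f : X → Set Y) (g : Z → Set W) :
    X × Z → Set (Y ⊕ W) :=
  fun xz => Sum.inl '' f xz.1 ∪ Sum.inr '' g xz.2

/-- Representation of the space of sequences `X^ℕ` via the countable tupling. -/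
noncomputable def seqRep {X : Type*} (δX : RepSp X) : RepSp (ℕ → X) where
  δ := fun r => Part.mk (∀ i : ℕ, ∃ x, x ∈ δX.δ (proj r i))
    (fun h i => Classical.choose (h i))
  surj := by
    intro x
    choose p hp using fun i => δX.surj (x i)
    refine ⟨fun m => p (Nat.unpair m).1 (Nat.unpair m).2, ?_⟩
    have hproj : ∀ i, proj (fun m => p (Nat.unpair m).1 (Nat.unpair m).2) i = p i := by
      intro i; funext k; simp [proj]
    have hdom : ∀ i : ℕ, ∃ y, y ∈ δX.δ (proj (fun m => p (Nat.unpair m).1 (Nat.unpair m).2) i) :=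
      fun i => ⟨x i, by rw [hproj i]; exact hp i⟩
    refine mem_part_mk hdom ?_
    funext i
    exact Part.mem_unique (Classical.choose_spec (hdom i)) (by rw [hproj i]; exact hp i)

/-- The parallelization `f̂` of a problem. -/
def parallelProblem {X Y : Type*} (f : X → Set Y) : (ℕ → X) → Set (ℕ → Y) :=
  fun x => {y | ∀ i, y i ∈ f (x i)}

/-- Representation of the finite power `Xⁿ` via the countable tupling. -/
noncomputable def finProdRep (n : ℕ) {X : Type*} (δX : RepSp X) : RepSp (Fin n → X) where
  δ := fun r => Part.mk (∀ i : Fin n, ∃ x, x ∈ δX.δ (proj r i))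
    (fun h i => Classical.choose (h i))
  surj := by
    intro x
    choose p hp using fun i => δX.surj (x i)
    classical
    refine ⟨fun m => if h : (Nat.unpair m).1 < n then p ⟨_, h⟩ (Nat.unpair m).2 else 0, ?_⟩
    have hproj : ∀ i : Fin n,
        proj (fun m => if h : (Nat.unpair m).1 < n then p ⟨_, h⟩ (Nat.unpair m).2 else 0) i
          = p i := by
      intro i; funext k; simp [proj, i.isLt]
    have hdom : ∀ i : Fin n, ∃ y, y ∈ δX.δ
        (proj (fun m => if h : (Nat.unpair m).1 < n then p ⟨_, h⟩ (Nat.unpair m).2 else 0) i) :=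
      fun i => ⟨x i, by rw [hproj i]; exact hp i⟩
    refine mem_part_mk hdom ?_
    funext i
    exact Part.mem_unique (Classical.choose_spec (hdom i)) (by rw [hproj i]; exact hp i)

/-- The `n`-fold product `fⁿ` of a problem with itself. -/
def finProdProblem (n : ℕ) {X Y : Type*} (f : X → Set Y) :
    (Fin n → X) → Set (Fin n → Y) :=
  fun x => {y | ∀ i, y i ∈ f (x i)}

/-- Representation of the space `X*` of words over `X`. -/
noncomputable def starRep {X : Type*} (δX : RepSp X) : RepSp (Σ n : ℕ, Fin n → X) where
  δ := fun r => Part.mk (∀ i : Fin (r 0), ∃ x, x ∈ δX.δ (proj (fun m => r (m + 1)) i))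
    (fun h => ⟨r 0, fun i => Classical.choose (h i)⟩)
  surj := by
    rintro ⟨n, x⟩
    choose p hp using fun i => δX.surj (x i)
    classical
    have hproj : ∀ i : Fin n,
        proj (fun m' => if h : (Nat.unpair m').1 < n then p ⟨_, h⟩ (Nat.unpair m').2 else 0) i
          = p i := by
      intro i; funext k; simp [proj, i.isLt]
    have hdom : ∀ i : Fin n, ∃ y, y ∈ δX.δ
        (proj (fun m' => if h : (Nat.unpair m').1 < n then p ⟨_, h⟩ (Nat.unpair m').2 else 0) i) :=
      fun i => ⟨x i, by rw [hproj i]; exact hp i⟩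
    refine ⟨fun m => Nat.casesOn m n
      (fun m' => if h : (Nat.unpair m').1 < n then p ⟨_, h⟩ (Nat.unpair m').2 else 0),
      Part.mem_mk_iff.mpr ⟨hdom, ?_⟩⟩
    have hx : (fun i : Fin n => Classical.choose (hdom i)) = x := funext fun i =>
      Part.mem_unique (Classical.choose_spec (hdom i)) (by rw [hproj i]; exact hp i)
    exact congrArg (Sigma.mk n) hx

/-- The finite parallelization `f*` of a problem. -/
def starProblem {X Y : Type*} (f : X → Set Y) :
    (Σ n : ℕ, Fin n → X) → Set (Σ n : ℕ, Fin n → Y) :=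
  fun x => {y | ∃ e : x.1 = y.1, ∀ i : Fin x.1, y.2 (Fin.cast e i) ∈ f (x.2 i)}

/-- Representation of a countable disjoint union of represented spaces. -/
def csumRep {Z : ℕ → Type*} (δZ : ∀ i, RepSp (Z i)) : RepSp (Σ i, Z i) where
  δ := fun r => ((δZ (r 0)).δ (fun n => r (n + 1))).map fun z => ⟨r 0, z⟩
  surj := by
    rintro ⟨i, z⟩
    obtain ⟨p, hp⟩ := (δZ i).surj z
    exact ⟨fun n => Nat.casesOn n i p, (Part.mem_map_iff _).mpr ⟨z, hp, rfl⟩⟩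

/-- The countable coproduct `⊔ᵢ gᵢ` of a sequence of problems. -/
def csumProblem {Z W : ℕ → Type*} (g : ∀ i, Z i → Set (W i)) :
    (Σ i, Z i) → Set (Σ i, W i) :=
  fun x => Sigma.mk x.1 '' g x.1 x.2

/-! ## Limits and jumps -/

/-- The limit map on Baire space, as a (single-valued) problem:
`lim⟨p₀,p₁,…⟩` is the pointwise limit of the sequence `(pₙ)ₙ`. -/
def limProblem : (ℕ → ℕ) → Set (ℕ → ℕ) :=
  fun r => {q | ∀ n, ∃ N, ∀ m, N ≤ m → proj r m n = q n}

/-- The limit map on Baire space as a partial (single-valued) function. -/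
noncomputable def limP : (ℕ → ℕ) →. (ℕ → ℕ) :=
  fun r => Part.mk (∀ n, ∃ N, ∀ m, N ≤ m → proj r m n = proj r N n)
    (fun h n => proj r (Classical.choose (h n)) n)

/-- The jump `(X′, δ′)` of a represented space: `δ′ := δ ∘ lim`. -/
noncomputable def jumpRep {X : Type*} (δ : RepSp X) : RepSp X where
  δ := fun p => (limP p).bind δ.δ
  surj := by
    intro x
    obtain ⟨p, hp⟩ := δ.surj x
    refine ⟨fun m => p (Nat.unpair m).2, Part.mem_bind_iff.mpr ⟨p, ?_, hp⟩⟩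
    have hproj : ∀ m, proj (fun m => p (Nat.unpair m).2) m = p := by
      intro m; funext k; simp [proj]
    have hdom : ∀ n, ∃ N, ∀ m, N ≤ m →
        proj (fun m => p (Nat.unpair m).2) m n = proj (fun m => p (Nat.unpair m).2) N n :=
      fun n => ⟨0, fun m _ => by rw [hproj m, hproj 0]⟩
    refine mem_part_mk hdom ?_
    funext n
    rw [hproj]

/-! ## Choice problems -/

/-- The representation of subsets of `ℕ` by enumerations of their complements:
`p` is a name of `A` iff `p` enumerates (via `p m = n + 1`) exactly the `n ∉ A`. -/
def enumNegRep : RepSp (Set ℕ) where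
  δ := fun p => Part.some {n | ∀ m, p m ≠ n + 1}
  surj := by
    intro S
    by_cases h : Sᶜ.Nonempty
    · obtain ⟨f, hf⟩ := (Set.to_countable Sᶜ).exists_eq_range h
      refine ⟨fun m => f m + 1, Part.mem_some_iff.mpr ?_⟩
      ext n
      simp only [Set.mem_setOf_eq]
      constructor
      · intro hn m hm
        have hfm : f m ∈ Sᶜ := by rw [hf]; exact ⟨m, rfl⟩
        have hfmn : f m = n := by omega
        rw [hfmn] at hfm
        exact hfm hn
      · intro hn
        by_contra hS
        have hmem : n ∈ Sᶜ := hS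
        rw [hf] at hmem
        obtain ⟨m, hm⟩ := hmem
        exact hn m (by omega)
    · refine ⟨fun _ => 0, Part.mem_some_iff.mpr ?_⟩
      have hS : S = Set.univ := by
        rw [← compl_compl S, Set.not_nonempty_iff_eq_empty.mp h, Set.compl_empty]
      rw [hS]
      ext n
      simp

/-- Choice on the natural numbers: given (a name of) a nonempty set `A ⊆ ℕ`,
find an element of `A`. -/
def CNat : Set ℕ → Set ℕ := fun A => A

/-- Choice on the finite set `{0, …, k-1}`. -/
def CFin (k : ℕ) : Set ℕ → Set ℕ := fun A => {n | n ∈ A ∧ A ⊆ Set.Iio k}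

/-- The limited principle of omniscience as a problem. -/
noncomputable def LPOProblem : (ℕ → ℕ) → Set ℕ :=
  fun p => {if ∃ k, p k = 0 then 1 else 0}


/-- Restriction of a problem on Baire space to a set `A`. -/
def restrictProblem (F : (ℕ → ℕ) → Set (ℕ → ℕ)) (A : Set (ℕ → ℕ)) :
    (ℕ → ℕ) → Set (ℕ → ℕ) :=
  fun p => {q | q ∈ F p ∧ p ∈ A}

/-- A problem is a fractal if it has a representative on Baire space all of whose
restrictions to clopen sets meeting its domain are Weihrauch equivalent to it. -/
def Fractal {X Y : Type*} (δX : RepSp X) (δY : RepSp Y) (f : X → Set Y) : Prop :=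
  ∃ F : (ℕ → ℕ) → Set (ℕ → ℕ),
    WEquiv repBaire repBaire δX δY F f ∧
    ∀ A : Set (ℕ → ℕ), IsClopen A → (A ∩ {p | (F p).Nonempty}).Nonempty →
      WEquiv repBaire repBaire repBaire repBaire (restrictProblem F A) F

/-- A problem `f` is densely realized if for every name `p` of an admissible instance
the set of names of solutions is dense in the domain of the output representation. -/
def DenselyRealized {X Y : Type*} (δX : RepSp X) (δY : RepSp Y) (f : X → Set Y) : Prop :=
  ∀ p, ∀ x ∈ δX.δ p, (f x).Nonempty →
    {q : ℕ → ℕ | (δY.δ q).Dom} ⊆ closure {q : ℕ → ℕ | ∃ y ∈ δY.δ q, y ∈ f x}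

/-- Turing reducibility on Baire space: `a` is computable from `b`. -/
def TRed (a b : ℕ → ℕ) : Prop := ∃ F, BaireComputable F ∧ a ∈ F b

/-- The two-point space `{p, q}` represented by the identity. -/
def pqRep (p q : ℕ → ℕ) : RepSp {r : ℕ → ℕ // r = p ∨ r = q} where
  δ := fun r => Part.mk (r = p ∨ r = q) (fun h => ⟨r, h⟩)
  surj := fun x => ⟨x.1, Part.mem_mk_iff.mpr ⟨x.2, rfl⟩⟩

/-- The problem `m_A` associated with a set `A ⊆ ℕ`. -/
noncomputable def mProblem (p q : ℕ → ℕ) (A : Set ℕ) :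
    ℕ → Set {r : ℕ → ℕ // r = p ∨ r = q} :=
  fun n => {y | y.1 = if n ∈ A then p else q}

/-- The join `A ⊕ B` of two sets of natural numbers. -/
def mJoin (A B : Set ℕ) : Set ℕ :=
  {k | (k % 2 = 0 ∧ k / 2 ∈ A) ∨ (k % 2 = 1 ∧ k / 2 ∈ B)}

/-- The cardinality `#f` of a problem: the supremum of the cardinalities of sets
`M ⊆ dom f` whose images under `f` are pairwise disjoint. -/
noncomputable def problemCard {X Y : Type} (f : X → Set Y) : Cardinal :=
  sSup {c | ∃ M : Set X, (∀ x ∈ M, (f x).Nonempty) ∧ M.PairwiseDisjoint f ∧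
    c = Cardinal.mk M}

/-- Computability of a problem: it has a computable realizer. -/
def ComputableProblem {X Y : Type*} (δX : RepSp X) (δY : RepSp Y) (f : X → Set Y) : Prop :=
  ∃ F, BaireComputable F ∧ Realizes δX δY f F

/-- The minimum function on Baire space. -/
def minProblem : (ℕ → ℕ) → Set ℕ :=
  fun p => {n | n ∈ Set.range p ∧ ∀ m, n ≤ p m}

/-- The complementary minimum function `minᶜ`. -/
def mincProblem : (ℕ → ℕ) → Set ℕ :=
  fun p => {n | (∀ m, p m ≠ n) ∧ ∀ j, j < n → ∃ m, p m = j}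

/-- The maximum function on Baire space (defined on bounded sequences). -/
def maxProblem : (ℕ → ℕ) → Set ℕ :=
  fun p => {n | n ∈ Set.range p ∧ ∀ m, p m ≤ n}


/-!
For `lim ≤sW LPÔ`, ask for every `n` and every pair `⟨N, v⟩` whether some `pₘ(n)` with
`m ≥ N` differs from `v`. A negative answer certifies that `lim pₘ(n) = v`, and since the
sequence converges some question about `n` is answered negatively, so the limit is read off
by searching for the first one. For `LPÔ ≤sW lim`, stage `s` records for each instance whether
it has a zero below `s`; these stages converge to the LPO answers.
All translations are computable because each output symbol is either determined by a finite,
computably bounded part of the input or found by a search that is never revised once it succeeds.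
-/

lemma length_pref (p : ℕ → ℕ) (m : ℕ) : (pref p m).length = m := by simp [pref]

lemma getD_pref (p : ℕ → ℕ) {m i : ℕ} (h : i < m) (d : ℕ) : (pref p m).getD i d = p i := by
  simp [pref, List.getD_eq_getElem?_getD, h]

lemma pref_prefix_pref (p : ℕ → ℕ) {m m' : ℕ} (h : m ≤ m') : pref p m <+: pref p m' := by
  rw [List.prefix_iff_getElem?]
  intro i hi
  rw [length_pref] at hi
  simp [pref, lt_of_lt_of_le hi h]

lemma List.IsPrefix.getD_eq {α : Type*} {u v : List α} (h : u <+: v) {i : ℕ} (hi : i < u.length)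
    (d : α) : v.getD i d = u.getD i d := by
  obtain ⟨w, rfl⟩ := h
  exact List.getD_append u w d i hi

namespace BaireComputable

variable (f : List ℕ → ℕ → Option ℕ)

/-- `f u n = some a` says that after reading the prefix `u` the `n`-th output is known to be `a`;
that knowledge must survive reading further. -/
def PrefixStable : Prop := ∀ u v n a, u <+: v → f u n = some a → f v n = some a

def committedLength (u : List ℕ) : ℕ :=
  Nat.findGreatest (fun k => ∀ n < k, (f u n).isSome) u.length

def committedWord (u : List ℕ) : List ℕ :=
  (List.range (committedLength f u)).map fun n => (f u n).getD 0

variable {f}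

lemma isSome_of_lt_committedLength {u : List ℕ} {n : ℕ} (h : n < committedLength f u) :
    (f u n).isSome :=
  Nat.findGreatest_spec (P := fun k => ∀ n < k, (f u n).isSome) (Nat.zero_le _)
    (fun _ h => absurd h (Nat.not_lt_zero _)) n h

lemma le_committedLength {u : List ℕ} {k : ℕ} (hk : k ≤ u.length)
    (h : ∀ n < k, (f u n).isSome) : k ≤ committedLength f u :=
  Nat.le_findGreatest hk h

lemma committedWord_primrec (hf : Primrec₂ f) : Primrec (committedWord f) := by
  have hcommitted : PrimrecRel fun (u : List ℕ) k => ∀ n < k, (f u n).isSome := by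
    have hsome : PrimrecRel fun (n : ℕ) (u : List ℕ) => (f u n).isSome :=
      Primrec.eq.comp (Primrec.option_isSome.comp (hf.comp Primrec.snd Primrec.fst))
        (Primrec.const true)
    exact ((PrimrecRel.forall_mem_list hsome).comp (Primrec.list_range.comp Primrec.snd)
      Primrec.fst).of_eq fun x => by simp
  exact Primrec.list_map
    (Primrec.list_range.comp (Primrec.nat_findGreatest Primrec.list_length hcommitted))
    (Primrec.option_getD.comp hf (Primrec.const 0))

lemma committedLength_mono (hstable : PrefixStable f) {u v : List ℕ} (huv : u <+: v) :
    committedLength f u ≤ committedLength f v :=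
  le_committedLength ((Nat.findGreatest_le _).trans huv.length_le) fun n hn => by
    obtain ⟨a, ha⟩ := Option.isSome_iff_exists.1 (isSome_of_lt_committedLength hn)
    rw [hstable u v n a huv ha]
    rfl

lemma committedWord_mono (hstable : PrefixStable f) {u v : List ℕ} (huv : u <+: v) :
    committedWord f u <+: committedWord f v := by
  rw [List.prefix_iff_getElem?]
  intro n hn
  have hu : n < committedLength f u := by simpa [committedWord] using hn
  obtain ⟨a, ha⟩ := Option.isSome_iff_exists.1 (isSome_of_lt_committedLength hu)
  have hv := committedLength_mono hstable huv
  simp [committedWord, lt_of_lt_of_le hu hv, ha, hstable u v n a huv ha]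

lemma getElem?_committedWord {u : List ℕ} {n : ℕ} (h : n < committedLength f u) :
    (committedWord f u)[n]? = some ((f u n).getD 0) := by
  simp [committedWord, h]

open Filter in
theorem of_approx {F : (ℕ → ℕ) →. (ℕ → ℕ)} (hf : Primrec₂ f) (hstable : PrefixStable f)
    (hF : ∀ p q, q ∈ F p → ∀ n, ∃ m, f (pref p m) n = some (q n)) : BaireComputable F := by
  refine ⟨committedWord f, (committedWord_primrec hf).to_comp,
    fun u v => committedWord_mono hstable, fun p q hq n => ?_⟩
  have heventually (i : ℕ) : ∀ᶠ m in atTop, f (pref p m) i = some (q i) := by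
    obtain ⟨m₀, hm₀⟩ := hF p q hq i
    exact eventually_atTop.2 ⟨m₀, fun m hm => hstable _ _ _ _ (pref_prefix_pref p hm) hm₀⟩
  obtain ⟨m, hnm, hm⟩ := ((eventually_ge_atTop (n + 1)).and
    ((eventually_all_finset (Finset.range (n + 1))).2 fun i _ => heventually i)).exists
  have hlen : n < committedLength f (pref p m) :=
    le_committedLength (by rw [length_pref]; exact hnm) fun i hi => by
      rw [hm i (Finset.mem_range.2 hi)]
      rfl
  refine ⟨m, ?_⟩
  rw [getElem?_committedWord hlen, hm n (Finset.self_mem_range_succ n)]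
  rfl

theorem of_use {K : (ℕ → ℕ) → ℕ → ℕ} (b : ℕ → ℕ) (hb : Primrec b)
    (hK : Primrec₂ fun (u : List ℕ) c => K (fun i => u.getD i 0) c)
    (huse : ∀ p p' c, (∀ i < b c, p i = p' i) → K p c = K p' c) :
    BaireComputable fun p => Part.some (K p) := by
  refine of_approx
    (f := fun u c => if b c ≤ u.length then some (K (fun i => u.getD i 0) c) else none)
    (Primrec.ite (Primrec.nat_le.comp (hb.comp Primrec.snd) (Primrec.list_length.comp Primrec.fst))
      (Primrec.option_some.comp hK) (Primrec.const none)) ?_ ?_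
  · intro u v c a huv h
    beta_reduce at h ⊢
    split_ifs at h with hbu
    rw [if_pos (hbu.trans huv.length_le), ← h]
    exact congrArg some <| huse _ _ c fun i hi => huv.getD_eq (lt_of_lt_of_le hi hbu) 0
  · intro p q hq c
    obtain rfl := Part.mem_some_iff.1 hq
    refine ⟨b c, ?_⟩
    rw [if_pos (length_pref p (b c)).ge]
    exact congrArg some <| huse _ _ c fun i hi => getD_pref p hi 0

theorem id : BaireComputable fun p => Part.some p :=
  of_use (K := fun p c => p c) (fun c => c + 1) Primrec.succ (Primrec.list_getD 0)
    fun _ _ c h => h c (Nat.lt_succ_self c)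

end BaireComputable

section FirstZeroSearch

variable {e : ℕ → ℕ}

/-- Positions beyond the end of `u` are read as `1`, so that they are never mistaken for zeros. -/
def firstZeroIdx (e : ℕ → ℕ) (u : List ℕ) : ℕ :=
  (List.range u.length).findIdx fun j => u.getD (e j) 1 == 0

lemma lt_length_of_getD_eq_zero {u : List ℕ} {i : ℕ} (h : u.getD i 1 = 0) : i < u.length := by
  by_contra hi
  rw [List.getD_eq_default u 1 (not_lt.1 hi)] at h
  exact one_ne_zero h

lemma firstZeroIdx_eq (he : StrictMono e) {u : List ℕ} {j : ℕ} (hj : u.getD (e j) 1 = 0)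
    (hlt : ∀ j' < j, u.getD (e j') 1 ≠ 0) : firstZeroIdx e u = j := by
  have hju : j < (List.range u.length).length := by
    simpa using lt_of_le_of_lt (he.id_le j) (lt_length_of_getD_eq_zero hj)
  rw [firstZeroIdx, List.findIdx_eq hju]
  simpa using ⟨hj, hlt⟩

lemma getD_firstZeroIdx {u : List ℕ} (h : firstZeroIdx e u < u.length) :
    u.getD (e (firstZeroIdx e u)) 1 = 0 ∧ ∀ j' < firstZeroIdx e u, u.getD (e j') 1 ≠ 0 := by
  have hlen : firstZeroIdx e u < (List.range u.length).length := by simpa using h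
  simpa using (List.findIdx_eq hlen).1 rfl

end FirstZeroSearch

def firstZeroSearch (e : ℕ → ℕ → ℕ) (g : ℕ → ℕ) : (ℕ → ℕ) →. (ℕ → ℕ) :=
  fun q => Part.mk (∀ n, ∃ j, q (e n j) = 0) fun h n => g (Nat.find (h n))

theorem baireComputable_firstZeroSearch {e : ℕ → ℕ → ℕ} {g : ℕ → ℕ} (he : Primrec₂ e)
    (he_mono : ∀ n, StrictMono (e n)) (hg : Primrec g) :
    BaireComputable (firstZeroSearch e g) := by
  have hidx : Primrec₂ fun (u : List ℕ) n => firstZeroIdx (e n) u :=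
    Primrec.list_findIdx (Primrec.list_range.comp (Primrec.list_length.comp Primrec.fst))
      (Primrec.beq.comp ((Primrec.list_getD 1).comp (Primrec.fst.comp Primrec.fst)
        (he.comp (Primrec.snd.comp Primrec.fst) Primrec.snd)) (Primrec.const 0))
  refine BaireComputable.of_approx
    (f := fun u n => if firstZeroIdx (e n) u < u.length then some (g (firstZeroIdx (e n) u))
      else none)
    (Primrec.ite (Primrec.nat_lt.comp hidx (Primrec.list_length.comp Primrec.fst))
      (Primrec.option_some.comp (hg.comp hidx)) (Primrec.const none)) ?_ ?_
  · intro u v n a huv h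
    beta_reduce at h ⊢
    split_ifs at h with hJ
    obtain ⟨hzero, hmin⟩ := getD_firstZeroIdx hJ
    have hagree : ∀ j ≤ firstZeroIdx (e n) u, v.getD (e n j) 1 = u.getD (e n j) 1 :=
      fun j hj => huv.getD_eq
        (lt_of_le_of_lt ((he_mono n).monotone hj) (lt_length_of_getD_eq_zero hzero)) 1
    have hJv : firstZeroIdx (e n) v = firstZeroIdx (e n) u :=
      firstZeroIdx_eq (he_mono n) (by rw [hagree _ le_rfl]; exact hzero)
        fun j hj => by rw [hagree j hj.le]; exact hmin j hj
    rw [hJv, if_pos (hJ.trans_le huv.length_le)]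
    exact h
  · intro q z hz n
    obtain ⟨h, rfl⟩ := Part.mem_mk_iff.1 hz
    set J := Nat.find (h n)
    have hagree : ∀ j ≤ J, (pref q (e n J + 1)).getD (e n j) 1 = q (e n j) :=
      fun j hj => getD_pref q (Nat.lt_succ_of_le ((he_mono n).monotone hj)) 1
    have hJ : firstZeroIdx (e n) (pref q (e n J + 1)) = J :=
      firstZeroIdx_eq (he_mono n) (by rw [hagree J le_rfl]; exact Nat.find_spec (h n))
        fun j hj => by rw [hagree j hj.le]; exact Nat.find_min (h n) hj
    refine ⟨e n J + 1, ?_⟩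
    beta_reduce
    rw [hJ, if_pos (by rw [length_pref]; exact Nat.lt_succ_of_le ((he_mono n).id_le J))]

lemma mem_seqRep_iff {X : Type*} {δ : RepSp X} {r : ℕ → ℕ} {x : ℕ → X} :
    x ∈ (seqRep δ).δ r ↔ ∀ i, x i ∈ δ.δ (proj r i) := by
  refine ⟨fun hx i => ?_, fun hx => ?_⟩
  · obtain ⟨h, rfl⟩ := Part.mem_mk_iff.1 hx
    exact Classical.choose_spec (h i)
  · have h : ∀ i, ∃ y, y ∈ δ.δ (proj r i) := fun i => ⟨x i, hx i⟩
    exact mem_part_mk h (funext fun i => Part.mem_unique (Classical.choose_spec (h i)) (hx i))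

lemma limProblem_subsingleton (r : ℕ → ℕ) : (limProblem r).Subsingleton := by
  intro q hq q' hq'
  funext n
  obtain ⟨m, hm, hm'⟩ := ((Filter.eventually_atTop.2 (hq n)).and
    (Filter.eventually_atTop.2 (hq' n))).exists
  exact hm.symm.trans hm'

/-- The LPO instance with index `⟨n, ⟨N, v⟩⟩` is `t ↦ [p_{N+t}(n) = v]`: it has a zero iff
`pₘ(n) ≠ v` for some `m ≥ N`. -/
def limQuestions (p : ℕ → ℕ) (c : ℕ) : ℕ :=
  if p (Nat.pair (c.unpair.1.unpair.2.unpair.1 + c.unpair.2) c.unpair.1.unpair.1) =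
    c.unpair.1.unpair.2.unpair.2 then 1 else 0

lemma exists_proj_limQuestions_eq_zero_iff (p : ℕ → ℕ) (n j : ℕ) :
    (∃ t, proj (limQuestions p) (Nat.pair n j) t = 0) ↔
      ∃ m ≥ j.unpair.1, proj p m n ≠ j.unpair.2 := by
  simp only [proj, limQuestions, Nat.unpair_pair, ite_eq_right_iff, one_ne_zero, imp_false]
  constructor
  · rintro ⟨t, ht⟩
    exact ⟨j.unpair.1 + t, Nat.le_add_right _ _, ht⟩
  · rintro ⟨m, hm, hne⟩
    exact ⟨m - j.unpair.1, by rwa [Nat.add_sub_cancel' hm]⟩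

theorem baireComputable_limQuestions : BaireComputable fun p => Part.some (limQuestions p) := by
  have u₁ : Primrec fun c : ℕ => c.unpair.1 := Primrec.fst.comp Primrec.unpair
  have u₂ : Primrec fun c : ℕ => c.unpair.2 := Primrec.snd.comp Primrec.unpair
  have hpos : Primrec fun c : ℕ =>
      Nat.pair (c.unpair.1.unpair.2.unpair.1 + c.unpair.2) c.unpair.1.unpair.1 :=
    Primrec₂.natPair.comp (Primrec.nat_add.comp (u₁.comp (u₂.comp u₁)) u₂) (u₁.comp u₁)
  refine BaireComputable.of_use _ (Primrec.succ.comp hpos) ?_ fun p p' c h => ?_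
  · exact Primrec.ite
      (Primrec.eq.comp ((Primrec.list_getD 0).comp Primrec.fst (hpos.comp Primrec.snd))
        ((u₂.comp (u₂.comp u₁)).comp Primrec.snd))
      (Primrec.const 1) (Primrec.const 0)
  · simp only [limQuestions, h _ (Nat.lt_succ_self _)]

theorem lim_swRed_parallelLPO :
    SWRed repBaire repBaire (seqRep repBaire) (seqRep repNat)
      limProblem (parallelProblem LPOProblem) := by
  refine ⟨firstZeroSearch (fun n j => Nat.pair (Nat.pair n j) 0) fun j => j.unpair.2,
    fun p => Part.some (limQuestions p),
    baireComputable_firstZeroSearch (Primrec₂.natPair.comp Primrec₂.natPair (Primrec.const 0))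
      (fun n _ _ h => Nat.pair_lt_pair_left 0 (Nat.pair_lt_pair_right n h))
      (Primrec.snd.comp Primrec.unpair),
    baireComputable_limQuestions, fun G hG p x hx ⟨ℓ, hℓ⟩ => ?_⟩
  obtain rfl : p = x := (Part.mem_some_iff.1 hx).symm
  obtain ⟨q, hqG, y, hyq, hy⟩ := hG (limQuestions p) (fun i => proj (limQuestions p) i)
    (mem_seqRep_iff.2 fun i => Part.mem_some _) ⟨_, fun i => rfl⟩
  have hanswer (n j : ℕ) :
      q (Nat.pair (Nat.pair n j) 0) = 0 ↔ ∀ m ≥ j.unpair.1, proj p m n = j.unpair.2 := by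
    have hyq' : y (Nat.pair n j) = q (Nat.pair (Nat.pair n j) 0) :=
      Part.mem_some_iff.1 (mem_seqRep_iff.1 hyq _)
    rw [← hyq', Set.mem_singleton_iff.1 (hy _), ite_eq_right_iff,
      exists_proj_limQuestions_eq_zero_iff]
    simp
  have hdom (n : ℕ) : ∃ j, q (Nat.pair (Nat.pair n j) 0) = 0 := by
    obtain ⟨N, hN⟩ := hℓ n
    exact ⟨Nat.pair N (ℓ n), (hanswer n _).2 (by simpa using hN)⟩
  refine ⟨_, Part.mem_bind_iff.2 ⟨_, Part.mem_some _,
    Part.mem_bind_iff.2 ⟨q, hqG, mem_part_mk hdom rfl⟩⟩, _, Part.mem_some _, fun n => ?_⟩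
  exact ⟨_, (hanswer n _).1 (Nat.find_spec (hdom n))⟩

/-- Stage `s` at position `j` records whether `p_{j.1}` has a zero below `s`, so the limit at
`⟨i, 0⟩` is the LPO answer for `pᵢ`, exactly where a name of the answer sequence stores it. -/
def lpoStages (p : ℕ → ℕ) (c : ℕ) : ℕ :=
  if ∃ k < c.unpair.1, p (Nat.pair c.unpair.2.unpair.1 k) = 0 then 1 else 0

lemma lpoStages_mem_limProblem (p : ℕ → ℕ) :
    (fun j => if ∃ k, p (Nat.pair j.unpair.1 k) = 0 then 1 else 0) ∈ limProblem (lpoStages p) := by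
  intro j
  by_cases hzero : ∃ k, p (Nat.pair j.unpair.1 k) = 0
  · obtain ⟨k, hk⟩ := hzero
    exact ⟨k + 1, fun s hs => by
      simp only [proj, lpoStages, Nat.unpair_pair]
      rw [if_pos ⟨k, hs, hk⟩, if_pos ⟨k, hk⟩]⟩
  · refine ⟨0, fun s _ => ?_⟩
    simp only [proj, lpoStages, Nat.unpair_pair]
    rw [if_neg fun ⟨k, _, hk⟩ => hzero ⟨k, hk⟩, if_neg hzero]

theorem baireComputable_lpoStages : BaireComputable fun p => Part.some (lpoStages p) := by
  have u₁ : Primrec fun c : ℕ => c.unpair.1 := Primrec.fst.comp Primrec.unpair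
  have u₂ : Primrec fun c : ℕ => c.unpair.2 := Primrec.snd.comp Primrec.unpair
  have hrow : Primrec fun c : ℕ => c.unpair.2.unpair.1 := u₁.comp u₂
  have hzero : PrimrecRel fun (k : ℕ) (x : List ℕ × ℕ) =>
      x.1.getD (Nat.pair x.2.unpair.2.unpair.1 k) 0 = 0 :=
    Primrec.eq.comp ((Primrec.list_getD 0).comp (Primrec.fst.comp Primrec.snd)
      (Primrec₂.natPair.comp (hrow.comp (Primrec.snd.comp Primrec.snd)) Primrec.fst))
      (Primrec.const 0)
  refine BaireComputable.of_use (fun c => Nat.pair c.unpair.2.unpair.1 c.unpair.1)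
    (Primrec₂.natPair.comp hrow u₁) ?_ fun p p' c h => ?_
  · refine Primrec.ite ?_ (Primrec.const 1) (Primrec.const 0)
    exact ((PrimrecRel.exists_mem_list hzero).comp
      (Primrec.list_range.comp (u₁.comp Primrec.snd)) Primrec.id).of_eq fun x => by simp
  · simp only [lpoStages]
    exact if_congr (exists_congr fun k => and_congr_right fun hk => by
      rw [h _ (Nat.pair_lt_pair_right _ hk)]) rfl rfl

theorem parallelLPO_swRed_lim :
    SWRed (seqRep repBaire) (seqRep repNat) repBaire repBaire
      (parallelProblem LPOProblem) limProblem := by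
  refine ⟨fun q => Part.some q, fun p => Part.some (lpoStages p), BaireComputable.id,
    baireComputable_lpoStages, fun G hG p x hx _ => ?_⟩
  obtain ⟨q, hqG, y, hyq, hy⟩ :=
    hG (lpoStages p) _ (Part.mem_some _) ⟨_, lpoStages_mem_limProblem p⟩
  obtain rfl := Part.mem_some_iff.1 hyq
  have hlim := limProblem_subsingleton _ hy (lpoStages_mem_limProblem p)
  refine ⟨y, Part.mem_bind_iff.2 ⟨_, Part.mem_some _,
      Part.mem_bind_iff.2 ⟨y, hqG, Part.mem_some _⟩⟩,
    fun i => y (Nat.pair i 0), mem_seqRep_iff.2 fun i => Part.mem_some _, fun i => ?_⟩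
  rw [Part.mem_some_iff.1 (mem_seqRep_iff.1 hx i), hlim]
  simp only [LPOProblem, Nat.unpair_pair, Set.mem_singleton_iff]
  rfl

/-- `lim ≡_sW` parallelization of `LPO`. -/
theorem lim_equiv_parallel_lpo :
    SWEquiv repBaire repBaire (seqRep repBaire) (seqRep repNat)
      limProblem (parallelProblem LPOProblem) :=
  ⟨lim_swRed_parallelLPO, parallelLPO_swRed_lim⟩
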